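/- Let F and G be real vector spaces, let ‖·‖_{X₀} and ‖·‖_{X₁} be quasi-norms on F and ‖·‖_{Y₀} and ‖·‖_{Y₁} be quasi-norms on G, all with quasi-triangle constants at most κ, let Z be a real vector space with a quasi-norm ‖·‖_Z of quasi-triangle constant at most κ, and let τ : F × G → Z be a bilinear map satisfying ‖τ(f,g)‖_Z ≤ ‖f‖_{X₀}·‖g‖_{Y₀} + ‖f‖_{X₁}·‖g‖_{Y₁} for all f ∈ F and g ∈ G. Let n ≥ 1, let f = (f_1,…,f_n) ∈ F^n and g = (g_1,…,g_n) ∈ G^n, let 0 < c₁ ≤ c₂, and for k = 0, 1 let A_k be a reducing matrix (with constants c₁, c₂) for f with respect to ‖·‖_{X_k} and B_k a reducing matrix (with constants c₁, c₂) for g with respect to ‖·‖_{Y_k}. Then there is a constant C depending only on n, c₁, c₂, κ such that ‖∑_{i=1}^n τ(f_i, g_i)‖_Z ≤ C·( ‖A₀·B₀‖_op + ‖A₁·B₁‖_op ). -/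

import Mathlib

open scoped TensorProduct

universe u v w

/-- The Euclidean norm on `Fin k → ℝ`. -/
noncomputable def euclNorm {k : ℕ} (x : Fin k → ℝ) : ℝ := Real.sqrt (∑ i, x i ^ 2)

/-- The operator norm of an `n × n` real matrix with respect to the Euclidean norm. -/
noncomputable def opNorm {n : ℕ} (M : Matrix (Fin n) (Fin n) ℝ) : ℝ :=
  ‖Matrix.toEuclideanCLM (𝕜 := ℝ) M‖

/-- A quasi-norm on a real vector space `Z` with quasi-triangle constant `κ`. -/
def IsQuasiNorm {Z : Type*} [AddCommGroup Z] [Module ℝ Z] (N : Z → ℝ) (κ : ℝ) : Prop :=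
  (∀ z, 0 ≤ N z) ∧ (∀ (l : ℝ) (z : Z), N (l • z) = |l| * N z) ∧
    ∀ z w, N (z + w) ≤ κ * (N z + N w)

/-- `A` is a reducing matrix for the tuple `f` with respect to `N` (with constants
`c₁ ≤ c₂`): `A` is positive semidefinite and `c₁|Ae| ≤ N(∑ eᵢ • fᵢ) ≤ c₂|Ae|`. -/
def IsReducing {X : Type*} [AddCommGroup X] [Module ℝ X] (N : X → ℝ)
    {n : ℕ} (f : Fin n → X) (c₁ c₂ : ℝ) (A : Matrix (Fin n) (Fin n) ℝ) : Prop :=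
  A.PosSemidef ∧ ∀ e : Fin n → ℝ,
    c₁ * euclNorm (A.mulVec e) ≤ N (∑ i, e i • f i) ∧
      N (∑ i, e i • f i) ≤ c₂ * euclNorm (A.mulVec e)

open Matrix

set_option synthInstance.maxHeartbeats 1000000
set_option maxHeartbeats 2000000

section Aux

variable {n : ℕ}

/-- auxiliary: the canonical identification of `Fin n → ℝ` with Euclidean space. -/
noncomputable def toE (x : Fin n → ℝ) : EuclideanSpace ℝ (Fin n) := (WithLp.equiv 2 _).symm x

lemma euclNorm_eq_norm (x : Fin n → ℝ) : euclNorm x = ‖toE x‖ := by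
  rw [EuclideanSpace.norm_eq]
  unfold euclNorm
  congr 1
  apply Finset.sum_congr rfl
  intro i _
  rw [Real.norm_eq_abs, sq_abs]
  rfl

lemma euclNorm_nonneg (x : Fin n → ℝ) : 0 ≤ euclNorm x := Real.sqrt_nonneg _

lemma euclNorm_sq (x : Fin n → ℝ) : euclNorm x ^ 2 = x ⬝ᵥ x := by
  unfold euclNorm
  rw [Real.sq_sqrt (Finset.sum_nonneg fun i _ => sq_nonneg _)]
  simp [dotProduct, sq]

lemma dotProduct_self_nonneg' (x : Fin n → ℝ) : 0 ≤ x ⬝ᵥ x := by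
  rw [← euclNorm_sq]; positivity

lemma dotProduct_le (x y : Fin n → ℝ) : x ⬝ᵥ y ≤ euclNorm x * euclNorm y := by
  have h : x ⬝ᵥ y = inner ℝ (toE x) (toE y) := by
    simp [PiLp.inner_apply, RCLike.inner_apply, conj_trivial, dotProduct, toE, mul_comm]
  rw [h, euclNorm_eq_norm, euclNorm_eq_norm]
  exact real_inner_le_norm _ _

lemma euclNorm_le_euclNorm {x y : Fin n → ℝ} (h : x ⬝ᵥ x ≤ y ⬝ᵥ y) :
    euclNorm x ≤ euclNorm y := by
  have h1 : ∀ z : Fin n → ℝ, euclNorm z = Real.sqrt (z ⬝ᵥ z) := by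
    intro z; rw [← euclNorm_sq]
    rw [Real.sqrt_sq (euclNorm_nonneg z)]
  rw [h1, h1]
  exact Real.sqrt_le_sqrt h

lemma euclNorm_mulVec_le (M : Matrix (Fin n) (Fin n) ℝ) (x : Fin n → ℝ) :
    euclNorm (M *ᵥ x) ≤ opNorm M * euclNorm x := by
  have h : Matrix.toEuclideanCLM (𝕜 := ℝ) M (toE x) = toE (M *ᵥ x) := by
    rfl
  rw [euclNorm_eq_norm, euclNorm_eq_norm, ← h]
  exact (Matrix.toEuclideanCLM (𝕜 := ℝ) M).le_opNorm _

lemma opNorm_nonneg (M : Matrix (Fin n) (Fin n) ℝ) : 0 ≤ opNorm M := norm_nonneg _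

lemma opNorm_transpose (M : Matrix (Fin n) (Fin n) ℝ) : opNorm Mᵀ = opNorm M := by
  unfold opNorm
  rw [← Matrix.conjTranspose_eq_transpose_of_trivial, ← Matrix.star_eq_conjTranspose,
    map_star, ContinuousLinearMap.star_eq_adjoint]
  exact LinearIsometryEquiv.norm_map ContinuousLinearMap.adjoint _

lemma opNorm_add_le (M N : Matrix (Fin n) (Fin n) ℝ) :
    opNorm (M + N) ≤ opNorm M + opNorm N := by
  unfold opNorm; rw [map_add]; exact norm_add_le _ _

lemma opNorm_smul (c : ℝ) (M : Matrix (Fin n) (Fin n) ℝ) :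
    opNorm (c • M) = |c| * opNorm M := by
  unfold opNorm
  rw [_root_.map_smul]
  rw [norm_smul c (Matrix.toEuclideanCLM (𝕜 := ℝ) M), Real.norm_eq_abs]

lemma herm_iff_symm (M : Matrix (Fin n) (Fin n) ℝ) : M.IsHermitian ↔ Mᵀ = M := by
  rw [Matrix.IsHermitian, Matrix.conjTranspose_eq_transpose_of_trivial]

lemma dot_mulVec_self (C : Matrix (Fin n) (Fin n) ℝ) (x : Fin n → ℝ) :
    (C *ᵥ x) ⬝ᵥ (C *ᵥ x) = x ⬝ᵥ ((Cᵀ * C) *ᵥ x) := by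
  rw [← Matrix.mulVec_mulVec, Matrix.dotProduct_mulVec x Cᵀ, Matrix.vecMul_transpose]

/-- spectral decomposition of a real symmetric matrix, in coordinate form. -/
lemma exists_eigen (M : Matrix (Fin n) (Fin n) ℝ) (hM : M.IsHermitian) :
    ∃ (u : Fin n → Fin n → ℝ) (d : Fin n → ℝ),
      (∀ k, M *ᵥ u k = d k • u k) ∧ (∀ k l, u k ⬝ᵥ u l = if k = l then 1 else 0) ∧
      (∀ i j, ∑ k, u k i * u k j = if i = j then (1:ℝ) else 0) := by
  classical
  let b := hM.eigenvectorBasis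
  have horto : ∀ k l, (fun i => b k i) ⬝ᵥ (fun i => b l i) = if k = l then (1:ℝ) else 0 := by
    intro k l
    have := (orthonormal_iff_ite.mp b.orthonormal) k l
    simpa [PiLp.inner_apply, RCLike.inner_apply, conj_trivial, dotProduct, mul_comm] using this
  refine ⟨fun k => b k, hM.eigenvalues, ?_, horto, ?_⟩
  · intro k; exact hM.mulVec_eigenvectorBasis k
  · intro i j
    let U : Matrix (Fin n) (Fin n) ℝ := Matrix.of (fun k i => b k i)
    have hUU : U * Uᵀ = 1 := by
      ext k l
      have := horto k l
      simpa [Matrix.mul_apply, Matrix.one_apply, U, dotProduct] using this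
    have h2 : Uᵀ * U = 1 := mul_eq_one_comm.mp hUU
    have h3 := congrFun (congrFun h2 i) j
    simpa [Matrix.mul_apply, Matrix.transpose_apply, Matrix.one_apply, U] using h3

lemma qn_zero {Z : Type*} [AddCommGroup Z] [Module ℝ Z] {N : Z → ℝ} {κ : ℝ}
    (h : IsQuasiNorm N κ) : N 0 = 0 := by
  have := h.2.1 0 0
  simpa using this

lemma qn_sum {Z : Type*} [AddCommGroup Z] [Module ℝ Z] {N : Z → ℝ} {κ : ℝ}
    (h : IsQuasiNorm N κ) (hκ : 1 ≤ κ) {ι : Type*} [DecidableEq ι] (s : Finset ι) (z : ι → Z) :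
    N (∑ i ∈ s, z i) ≤ κ ^ s.card * ∑ i ∈ s, N (z i) := by
  induction s using Finset.cons_induction with
  | empty => simp [qn_zero h]
  | cons a s ha ih =>
    rw [Finset.sum_cons, Finset.card_cons, Finset.sum_cons]
    have h1 : N (z a + ∑ i ∈ s, z i) ≤ κ * (N (z a) + N (∑ i ∈ s, z i)) := h.2.2 _ _
    have h2 : N (∑ i ∈ s, z i) ≤ κ ^ s.card * ∑ i ∈ s, N (z i) := ih
    have hNa : 0 ≤ N (z a) := h.1 _
    have hNs : 0 ≤ ∑ i ∈ s, N (z i) := Finset.sum_nonneg fun i _ => h.1 _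
    have hκn : (1:ℝ) ≤ κ ^ s.card := one_le_pow₀ hκ
    have hκs : κ ≤ κ ^ (s.card + 1) := by
      calc κ = κ ^ 1 := (pow_one κ).symm
      _ ≤ κ ^ (s.card + 1) := pow_le_pow_right₀ hκ (by omega)
    have hκ0 : 0 < κ := lt_of_lt_of_le one_pos hκ
    calc N (z a + ∑ i ∈ s, z i) ≤ κ * (N (z a) + N (∑ i ∈ s, z i)) := h1
    _ ≤ κ * (N (z a) + κ ^ s.card * ∑ i ∈ s, N (z i)) := by nlinarith
    _ = κ * N (z a) + κ ^ (s.card + 1) * ∑ i ∈ s, N (z i) := by rw [pow_succ]; ring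
    _ ≤ κ ^ (s.card + 1) * N (z a) + κ ^ (s.card + 1) * ∑ i ∈ s, N (z i) := by nlinarith
    _ = κ ^ (s.card + 1) * (N (z a) + ∑ i ∈ s, N (z i)) := by ring

end Aux

/-- **Vector-valued bootstrapping of bilinear estimates with a two-term bound**
(Theorem 5.3): if `‖τ(f,g)‖_Z ≤ ‖f‖_{X₀}‖g‖_{Y₀} + ‖f‖_{X₁}‖g‖_{Y₁}`, then
`‖∑ τ(fᵢ, gᵢ)‖_Z ≲ ‖A₀·B₀‖_op + ‖A₁·B₁‖_op` for reducing matrices `Aₖ, Bₖ`. -/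
theorem stmt17 (n : ℕ) (hn : 1 ≤ n) (c₁ c₂ κ : ℝ) (hc₁ : 0 < c₁) (hc₁₂ : c₁ ≤ c₂)
    (hκ : 1 ≤ κ) :
    ∃ C : ℝ, 0 < C ∧
      ∀ (F : Type u) (G : Type v) (Z : Type w)
        [AddCommGroup F] [Module ℝ F] [AddCommGroup G] [Module ℝ G]
        [AddCommGroup Z] [Module ℝ Z]
        (NX₀ NX₁ : F → ℝ) (NY₀ NY₁ : G → ℝ) (NZ : Z → ℝ),
        IsQuasiNorm NX₀ κ → IsQuasiNorm NX₁ κ → IsQuasiNorm NY₀ κ → IsQuasiNorm NY₁ κ →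
        IsQuasiNorm NZ κ →
        ∀ τ : F →ₗ[ℝ] G →ₗ[ℝ] Z,
          (∀ (f : F) (g : G), NZ (τ f g) ≤ NX₀ f * NY₀ g + NX₁ f * NY₁ g) →
          ∀ (f : Fin n → F) (g : Fin n → G)
            (A₀ A₁ B₀ B₁ : Matrix (Fin n) (Fin n) ℝ),
            IsReducing NX₀ f c₁ c₂ A₀ → IsReducing NX₁ f c₁ c₂ A₁ →
            IsReducing NY₀ g c₁ c₂ B₀ → IsReducing NY₁ g c₁ c₂ B₁ →
            NZ (∑ i, τ (f i) (g i)) ≤ C * (opNorm (A₀ * B₀) + opNorm (A₁ * B₁)) := by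
  classical
  have hc₂ : 0 < c₂ := lt_of_lt_of_le hc₁ hc₁₂
  have hκ0 : 0 < κ := lt_of_lt_of_le one_pos hκ
  refine ⟨(n : ℝ) * c₂ ^ 2 * κ ^ n, by positivity, ?_⟩
  intro F G Z _ _ _ _ _ _ NX₀ NX₁ NY₀ NY₁ NZ hNX₀ hNX₁ hNY₀ hNY₁ hNZ τ hτ f g A₀ A₁ B₀ B₁
    hA₀ hA₁ hB₀ hB₁
  set C : ℝ := (n : ℝ) * c₂ ^ 2 * κ ^ n with hCdef
  have hC0 : 0 < C := by rw [hCdef]; positivity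
  -- symmetry facts
  have hA₀s : A₀ᵀ = A₀ := (herm_iff_symm A₀).mp hA₀.1.1
  have hA₁s : A₁ᵀ = A₁ := (herm_iff_symm A₁).mp hA₁.1.1
  have hB₀s : B₀ᵀ = B₀ := (herm_iff_symm B₀).mp hB₀.1.1
  have hB₁s : B₁ᵀ = B₁ := (herm_iff_symm B₁).mp hB₁.1.1
  -- key estimate for every ε > 0
  have key : ∀ ε : ℝ, 0 < ε →
      NZ (∑ i, τ (f i) (g i)) ≤ C * (opNorm (A₀ * B₀) + opNorm (A₁ * B₁))
        + C * (ε * opNorm B₀) := by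
    intro ε hε
    set P : Matrix (Fin n) (Fin n) ℝ := A₀ + ε • (1 : Matrix (Fin n) (Fin n) ℝ) with hPdef
    have hPd : P.PosDef := by
      refine Matrix.PosDef.of_dotProduct_mulVec_pos ?_ (fun x hx => ?_)
      · rw [herm_iff_symm]
        simp [hPdef, Matrix.transpose_add, Matrix.transpose_smul, hA₀s]
      · have h1 : 0 ≤ x ⬝ᵥ (A₀ *ᵥ x) := by
          have := hA₀.1.dotProduct_mulVec_nonneg x
          simpa using this
        have h2 : 0 < x ⬝ᵥ x := by
          rcases (Function.ne_iff).mp hx with ⟨i, hi⟩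
          have : 0 < x i * x i := mul_self_pos.mpr hi
          refine Finset.sum_pos' (fun j _ => mul_self_nonneg _) ⟨i, Finset.mem_univ i, this⟩
        have h3 : P *ᵥ x = A₀ *ᵥ x + ε • x := by
          rw [hPdef, Matrix.add_mulVec, Matrix.smul_mulVec, Matrix.one_mulVec]
        simp only [star_trivial, h3, dotProduct_add]
        have h4 : x ⬝ᵥ (ε • x) = ε * (x ⬝ᵥ x) := by
          rw [dotProduct_smul]; simp [smul_eq_mul]
        rw [h4]
        nlinarith
    have hdet : IsUnit P.det := (Matrix.isUnit_iff_isUnit_det _).mp hPd.isUnit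
    set Q : Matrix (Fin n) (Fin n) ℝ := P⁻¹ with hQdef
    have hPQ : P * Q = 1 := Matrix.mul_nonsing_inv _ hdet
    have hQP : Q * P = 1 := Matrix.nonsing_inv_mul _ hdet
    have hPs : Pᵀ = P := (herm_iff_symm P).mp hPd.1
    have hQs : Qᵀ = Q := by rw [hQdef, Matrix.transpose_nonsing_inv, hPs]
    set M : Matrix (Fin n) (Fin n) ℝ := Q * (A₁ * A₁) * Q with hMdef
    have hMherm : M.IsHermitian := by
      rw [herm_iff_symm]
      simp only [hMdef, Matrix.transpose_mul, hQs, hA₁s, Matrix.mul_assoc]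
    obtain ⟨uu, d, heig, horto, hcomp⟩ := exists_eigen M hMherm
    set vv : Fin n → Fin n → ℝ := fun k => Q *ᵥ uu k with hvdef
    set ww : Fin n → Fin n → ℝ := fun k => P *ᵥ uu k with hwdef
    have huu : ∀ k, uu k ⬝ᵥ uu k = 1 := by intro k; simpa using horto k k
    have hu1 : ∀ k, euclNorm (uu k) = 1 := by
      intro k
      have h1 : euclNorm (uu k) ^ 2 = 1 := by rw [euclNorm_sq]; exact huu k
      nlinarith [euclNorm_nonneg (uu k)]
    have hPv : ∀ k, P *ᵥ vv k = uu k := by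
      intro k
      rw [hvdef]
      simp only []
      rw [Matrix.mulVec_mulVec, hPQ, Matrix.one_mulVec]
    -- the decomposition identity
    have hdelta : ∀ i j, (∑ k, vv k i * ww k j) = if i = j then (1:ℝ) else 0 := by
      intro i j
      have hPij : ∀ a, P j a = P a j := by
        intro a
        have := congrFun (congrFun hPs a) j
        simpa [Matrix.transpose_apply] using this
      calc ∑ k, vv k i * ww k j
          = ∑ k, ∑ a, ∑ b, (Q i a * P j b) * (uu k a * uu k b) := by
            apply Finset.sum_congr rfl
            intro k _
            rw [hvdef, hwdef]
            simp only [Matrix.mulVec, dotProduct]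
            rw [Finset.sum_mul_sum]
            apply Finset.sum_congr rfl; intro a _
            apply Finset.sum_congr rfl; intro b _
            ring
        _ = ∑ a, ∑ b, (Q i a * P j b) * (∑ k, uu k a * uu k b) := by
            rw [Finset.sum_comm]
            apply Finset.sum_congr rfl; intro a _
            rw [Finset.sum_comm]
            apply Finset.sum_congr rfl; intro b _
            rw [Finset.mul_sum]
        _ = ∑ a, Q i a * P j a := by
            apply Finset.sum_congr rfl; intro a _
            rw [Finset.sum_eq_single a]
            · rw [hcomp a a]; simp
            · intro b _ hb
              rw [hcomp a b, if_neg (Ne.symm hb), mul_zero]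
            · intro h; exact absurd (Finset.mem_univ a) h
        _ = (Q * P) i j := by
            rw [Matrix.mul_apply]
            apply Finset.sum_congr rfl; intro a _
            rw [hPij a]
        _ = if i = j then (1:ℝ) else 0 := by rw [hQP, Matrix.one_apply]
    have hsum : ∑ k, τ (∑ i, vv k i • f i) (∑ j, ww k j • g j) = ∑ i, τ (f i) (g i) := by
      have hexp : ∀ k, τ (∑ i, vv k i • f i) (∑ j, ww k j • g j)
          = ∑ i, ∑ j, (vv k i * ww k j) • τ (f i) (g j) := by
        intro k
        rw [_root_.map_sum τ, LinearMap.sum_apply]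
        apply Finset.sum_congr rfl; intro i _
        rw [_root_.map_smul τ, LinearMap.smul_apply, _root_.map_sum (τ (f i)), Finset.smul_sum]
        apply Finset.sum_congr rfl; intro j _
        rw [_root_.map_smul (τ (f i)), smul_smul]
      calc ∑ k, τ (∑ i, vv k i • f i) (∑ j, ww k j • g j)
          = ∑ k, ∑ i, ∑ j, (vv k i * ww k j) • τ (f i) (g j) := by
            exact Finset.sum_congr rfl fun k _ => hexp k
        _ = ∑ i, ∑ j, (∑ k, vv k i * ww k j) • τ (f i) (g j) := by
            rw [Finset.sum_comm]
            apply Finset.sum_congr rfl; intro i _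
            rw [Finset.sum_comm]
            apply Finset.sum_congr rfl; intro j _
            rw [Finset.sum_smul]
        _ = ∑ i, τ (f i) (g i) := by
            apply Finset.sum_congr rfl; intro i _
            rw [Finset.sum_eq_single i]
            · rw [hdelta i i]; simp
            · intro j _ hj
              rw [hdelta i j, if_neg (fun h => hj h.symm), zero_smul]
            · intro h; exact absurd (Finset.mem_univ i) h
    -- per-k estimates
    have est0v : ∀ k, euclNorm (A₀ *ᵥ vv k) ≤ 1 := by
      intro k
      have h1 : euclNorm (A₀ *ᵥ vv k) ≤ euclNorm (P *ᵥ vv k) := by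
        apply euclNorm_le_euclNorm
        set x := vv k
        have h3 : P *ᵥ x = A₀ *ᵥ x + ε • x := by
          rw [hPdef, Matrix.add_mulVec, Matrix.smul_mulVec, Matrix.one_mulVec]
        have hax : 0 ≤ x ⬝ᵥ (A₀ *ᵥ x) := by simpa using hA₀.1.dotProduct_mulVec_nonneg x
        have hax' : (A₀ *ᵥ x) ⬝ᵥ x = x ⬝ᵥ (A₀ *ᵥ x) := dotProduct_comm _ _
        have hxx : 0 ≤ x ⬝ᵥ x := dotProduct_self_nonneg' x
        rw [h3]
        have expand : (A₀ *ᵥ x + ε • x) ⬝ᵥ (A₀ *ᵥ x + ε • x)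
            = (A₀ *ᵥ x) ⬝ᵥ (A₀ *ᵥ x) + ε * ((A₀ *ᵥ x) ⬝ᵥ x) + ε * (x ⬝ᵥ (A₀ *ᵥ x))
              + ε * ε * (x ⬝ᵥ x) := by
          rw [dotProduct_add, add_dotProduct, add_dotProduct,
            smul_dotProduct, dotProduct_smul, smul_dotProduct,
            dotProduct_smul]
          simp only [smul_eq_mul]
          ring
        rw [expand]
        nlinarith
      rw [hPv k, hu1 k] at h1
      exact h1
    have est0w : ∀ k, euclNorm (B₀ *ᵥ ww k) ≤ opNorm (B₀ * P) := by
      intro k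
      have h1 : B₀ *ᵥ ww k = (B₀ * P) *ᵥ uu k := by
        rw [hwdef]; simp only []; rw [Matrix.mulVec_mulVec]
      rw [h1]
      have := euclNorm_mulVec_le (B₀ * P) (uu k)
      rwa [hu1 k, mul_one] at this
    have est1 : ∀ k, euclNorm (A₁ *ᵥ vv k) * euclNorm (B₁ *ᵥ ww k) ≤ opNorm (A₁ * B₁) := by
      intro k
      set a := A₁ *ᵥ vv k with hadef
      set b := B₁ *ᵥ ww k with hbdef
      set X := euclNorm a * euclNorm b with hXdef
      have hXnn : 0 ≤ X := mul_nonneg (euclNorm_nonneg a) (euclNorm_nonneg b)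
      have ha2 : a = (A₁ * Q) *ᵥ uu k := by rw [hadef, hvdef]; simp only []; rw [Matrix.mulVec_mulVec]
      have hb2 : b = (B₁ * P) *ᵥ uu k := by rw [hbdef, hwdef]; simp only []; rw [Matrix.mulVec_mulVec]
      have hda : a ⬝ᵥ a = d k := by
        rw [ha2, dot_mulVec_self]
        have hMid : (A₁ * Q)ᵀ * (A₁ * Q) = M := by
          rw [Matrix.transpose_mul, hQs, hA₁s, hMdef]
          simp only [Matrix.mul_assoc]
        rw [hMid, heig k, dotProduct_smul]
        simp [smul_eq_mul, huu k]
      have hdb : d k • b = (B₁ * A₁) *ᵥ a := by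
        have h1 : d k • b = (B₁ * P) *ᵥ (M *ᵥ uu k) := by
          rw [hb2, heig k, Matrix.mulVec_smul]
        have h2 : (B₁ * P) * M = (B₁ * A₁) * (A₁ * Q) := by
          have h21 : (B₁ * P) * M = B₁ * ((P * Q) * ((A₁ * A₁) * Q)) := by
            simp only [hMdef, Matrix.mul_assoc]
          rw [h21, hPQ, Matrix.one_mul]
          simp only [Matrix.mul_assoc]
        rw [h1, Matrix.mulVec_mulVec, h2, ← Matrix.mulVec_mulVec, ← ha2]
      have hX2 : X ^ 2 = ((B₁ * A₁) *ᵥ a) ⬝ᵥ b := by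
        rw [hXdef, mul_pow, euclNorm_sq, euclNorm_sq, hda, ← hdb]
        rw [smul_dotProduct]
        simp [smul_eq_mul]
      have hbound : X ^ 2 ≤ opNorm (B₁ * A₁) * X := by
        rw [hX2]
        calc ((B₁ * A₁) *ᵥ a) ⬝ᵥ b ≤ euclNorm ((B₁ * A₁) *ᵥ a) * euclNorm b :=
              dotProduct_le _ _
          _ ≤ (opNorm (B₁ * A₁) * euclNorm a) * euclNorm b := by
              apply mul_le_mul_of_nonneg_right (euclNorm_mulVec_le _ _) (euclNorm_nonneg b)
          _ = opNorm (B₁ * A₁) * X := by rw [hXdef]; ring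
      have hXle : X ≤ opNorm (B₁ * A₁) := by
        rcases eq_or_lt_of_le hXnn with h | h
        · rw [← h]; exact opNorm_nonneg _
        · have h3 : X * X ≤ opNorm (B₁ * A₁) * X := by nlinarith
          exact le_of_mul_le_mul_right h3 h
      have hop : opNorm (B₁ * A₁) = opNorm (A₁ * B₁) := by
        rw [← opNorm_transpose (B₁ * A₁), Matrix.transpose_mul, hA₁s, hB₁s]
      rw [hXdef, hadef, hbdef] at hXle
      rw [← hop]
      exact hXle
    -- per-k quasi-norm estimate
    have estk : ∀ k, NZ (τ (∑ i, vv k i • f i) (∑ j, ww k j • g j))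
        ≤ c₂ ^ 2 * (opNorm (B₀ * P) + opNorm (A₁ * B₁)) := by
      intro k
      have h1 := hτ (∑ i, vv k i • f i) (∑ j, ww k j • g j)
      have hx0 : NX₀ (∑ i, vv k i • f i) ≤ c₂ * euclNorm (A₀ *ᵥ vv k) := (hA₀.2 (vv k)).2
      have hx1 : NX₁ (∑ i, vv k i • f i) ≤ c₂ * euclNorm (A₁ *ᵥ vv k) := (hA₁.2 (vv k)).2
      have hy0 : NY₀ (∑ j, ww k j • g j) ≤ c₂ * euclNorm (B₀ *ᵥ ww k) := (hB₀.2 (ww k)).2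
      have hy1 : NY₁ (∑ j, ww k j • g j) ≤ c₂ * euclNorm (B₁ *ᵥ ww k) := (hB₁.2 (ww k)).2
      have ht0 : NX₀ (∑ i, vv k i • f i) * NY₀ (∑ j, ww k j • g j)
          ≤ c₂ ^ 2 * (euclNorm (A₀ *ᵥ vv k) * euclNorm (B₀ *ᵥ ww k)) := by
        have := mul_le_mul hx0 hy0 (hNY₀.1 _) (mul_nonneg (le_of_lt hc₂) (euclNorm_nonneg _))
        nlinarith [this]
      have ht1 : NX₁ (∑ i, vv k i • f i) * NY₁ (∑ j, ww k j • g j)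
          ≤ c₂ ^ 2 * (euclNorm (A₁ *ᵥ vv k) * euclNorm (B₁ *ᵥ ww k)) := by
        have := mul_le_mul hx1 hy1 (hNY₁.1 _) (mul_nonneg (le_of_lt hc₂) (euclNorm_nonneg _))
        nlinarith [this]
      have hp0 : euclNorm (A₀ *ᵥ vv k) * euclNorm (B₀ *ᵥ ww k) ≤ opNorm (B₀ * P) := by
        have := mul_le_mul (est0v k) (est0w k) (euclNorm_nonneg _) zero_le_one
        rwa [one_mul] at this
      have hp1 := est1 k
      have hc₂2 : (0:ℝ) ≤ c₂ ^ 2 := by positivity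
      calc NZ (τ (∑ i, vv k i • f i) (∑ j, ww k j • g j))
          ≤ NX₀ (∑ i, vv k i • f i) * NY₀ (∑ j, ww k j • g j)
            + NX₁ (∑ i, vv k i • f i) * NY₁ (∑ j, ww k j • g j) := h1
        _ ≤ c₂ ^ 2 * (euclNorm (A₀ *ᵥ vv k) * euclNorm (B₀ *ᵥ ww k))
            + c₂ ^ 2 * (euclNorm (A₁ *ᵥ vv k) * euclNorm (B₁ *ᵥ ww k)) := by
            exact add_le_add ht0 ht1
        _ ≤ c₂ ^ 2 * opNorm (B₀ * P) + c₂ ^ 2 * opNorm (A₁ * B₁) := by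
            exact add_le_add (mul_le_mul_of_nonneg_left hp0 hc₂2)
              (mul_le_mul_of_nonneg_left hp1 hc₂2)
        _ = c₂ ^ 2 * (opNorm (B₀ * P) + opNorm (A₁ * B₁)) := by ring
    -- assemble
    have hBP : opNorm (B₀ * P) ≤ opNorm (A₀ * B₀) + ε * opNorm B₀ := by
      have h1 : B₀ * P = B₀ * A₀ + ε • B₀ := by
        rw [hPdef, Matrix.mul_add, Matrix.mul_smul, Matrix.mul_one]
      have h2 : opNorm (B₀ * A₀) = opNorm (A₀ * B₀) := by
        rw [← opNorm_transpose (B₀ * A₀), Matrix.transpose_mul, hA₀s, hB₀s]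
      rw [h1]
      refine (opNorm_add_le _ _).trans ?_
      rw [h2, opNorm_smul, abs_of_pos hε]
    have main : NZ (∑ i, τ (f i) (g i))
        ≤ κ ^ n * ((n : ℝ) * (c₂ ^ 2 * (opNorm (B₀ * P) + opNorm (A₁ * B₁)))) := by
      rw [← hsum]
      have h1 := qn_sum hNZ hκ Finset.univ
        (fun k => τ (∑ i, vv k i • f i) (∑ j, ww k j • g j))
      have hcard : (Finset.univ : Finset (Fin n)).card = n := by simp
      rw [hcard] at h1
      refine h1.trans ?_
      have h2 : ∑ k, NZ (τ (∑ i, vv k i • f i) (∑ j, ww k j • g j))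
          ≤ (n : ℝ) * (c₂ ^ 2 * (opNorm (B₀ * P) + opNorm (A₁ * B₁))) := by
        calc ∑ k, NZ (τ (∑ i, vv k i • f i) (∑ j, ww k j • g j))
            ≤ ∑ _k : Fin n, c₂ ^ 2 * (opNorm (B₀ * P) + opNorm (A₁ * B₁)) :=
              Finset.sum_le_sum fun k _ => estk k
          _ = (n : ℝ) * (c₂ ^ 2 * (opNorm (B₀ * P) + opNorm (A₁ * B₁))) := by
              rw [Finset.sum_const]; simp [mul_comm]
      have hκn : (0:ℝ) ≤ κ ^ n := by positivity
      exact mul_le_mul_of_nonneg_left h2 hκn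
    refine main.trans ?_
    have h3 : opNorm (B₀ * P) + opNorm (A₁ * B₁)
        ≤ (opNorm (A₀ * B₀) + opNorm (A₁ * B₁)) + ε * opNorm B₀ := by nlinarith [hBP]
    calc κ ^ n * ((n : ℝ) * (c₂ ^ 2 * (opNorm (B₀ * P) + opNorm (A₁ * B₁))))
        ≤ κ ^ n * ((n : ℝ) * (c₂ ^ 2 * ((opNorm (A₀ * B₀) + opNorm (A₁ * B₁))
          + ε * opNorm B₀))) := by
          have hnn : (0:ℝ) ≤ κ ^ n * ((n:ℝ) * c₂ ^ 2) := by positivity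
          nlinarith [h3, hnn]
      _ = C * (opNorm (A₀ * B₀) + opNorm (A₁ * B₁)) + C * (ε * opNorm B₀) := by
          rw [hCdef]; ring
  -- conclude by letting ε → 0
  refine le_of_forall_pos_le_add ?_
  intro δ hδ
  have hden : (0:ℝ) < C * opNorm B₀ + 1 := by
    have := opNorm_nonneg B₀; nlinarith
  have hεpos : 0 < δ / (C * opNorm B₀ + 1) := div_pos hδ hden
  refine (key _ hεpos).trans ?_
  have h4 : C * (δ / (C * opNorm B₀ + 1) * opNorm B₀) ≤ δ := by
    rw [div_mul_eq_mul_div, mul_div_assoc']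
    rw [div_le_iff₀ hden]
    have := opNorm_nonneg B₀
    nlinarith
  nlinarith [h4]
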